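/- Let a ∈ (1/2, (√17 − 3)/2) and define b₀ := (2 − 3a − a²)/2, b₂ := a(a+2), b₄ := a(a+1)/2, and w : ℝ → ℝ by w(x) = 2 − |x|^{2a} for |x| ≤ 1 and w(x) = b₀ + b₂/x² − b₄/x⁴ for |x| ≥ 1. Then b₀ > 0, w is twice continuously differentiable on ℝ∖{0}, and w(x) > 0 for every x ∈ ℝ∖{0}. -/

import Mathlib

/-!
Writing `t = x²`, the weight is `w x = W (x ^ 2)` where `W t = 2 - t ^ a` for `t ≤ 1` and
`W t = b₀ + b₂ / t - b₄ / t ^ 2` for `t > 1`. Both branches are smooth on `(0, ∞)`, and the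
constants make them agree to second order at `t = 1`, so `W` is `C²` there; composing with
`x ↦ x²` gives the regularity of `w` away from `0`. Positivity: `t ^ a ≤ 1` on `[0, 1]`, while
for `t > 1` we have `t² W t = b₀ t² + b₂ t - b₄ > b₂ - b₄ = a (a + 3) / 2 > 0` as soon as
`b₀ ≥ 0`, and `b₀ > 0` is exactly `a < (√17 - 3) / 2`.
-/

open Real Set

section Gluing

variable {U : Set ℝ} {c : ℝ} {f g f' g' : ℝ → ℝ}

theorem hasDerivAt_ite_le {x : ℝ} (hf : HasDerivAt f (f' x) x) (hg : HasDerivAt g (g' x) x)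
    (hc : f c = g c) (hc' : f' c = g' c) :
    HasDerivAt (fun y => if y ≤ c then f y else g y) (if x ≤ c then f' x else g' x) x := by
  rcases lt_trichotomy x c with hxc | rfl | hxc
  · rw [if_pos hxc.le]
    refine hf.congr_of_eventuallyEq ?_
    filter_upwards [Iio_mem_nhds hxc] with y hy using if_pos (le_of_lt hy)
  · have hleft : HasDerivWithinAt (fun y => if y ≤ x then f y else g y) (f' x) (Iic x) x :=
      hf.hasDerivWithinAt.congr (fun y hy => if_pos hy) (if_pos le_rfl)
    have hright : HasDerivWithinAt (fun y => if y ≤ x then f y else g y) (f' x) (Ici x) x := by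
      have hgf : EqOn (fun y => if y ≤ x then f y else g y) g (Ici x) := fun y hy => by
        rcases (mem_Ici.mp hy).eq_or_lt with rfl | hy
        · exact (if_pos le_rfl).trans hc
        · exact if_neg (not_le.mpr hy)
      exact (hc' ▸ hg).hasDerivWithinAt.congr hgf (hgf self_mem_Ici)
    rw [if_pos le_rfl, ← hasDerivWithinAt_univ, ← Iic_union_Ici]
    exact hleft.union hright
  · rw [if_neg (not_le.mpr hxc)]
    refine hg.congr_of_eventuallyEq ?_
    filter_upwards [Ioi_mem_nhds hxc] with y hy using if_neg (not_le.mpr hy)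

theorem ContinuousOn.ite_le (hf : ContinuousOn f U) (hg : ContinuousOn g U) (hc : f c = g c) :
    ContinuousOn (fun x => if x ≤ c then f x else g x) U := by
  refine ContinuousOn.if (fun x hx => ?_) (hf.mono inter_subset_left) (hg.mono inter_subset_left)
  rw [show {x | x ≤ c} = Iic c from rfl, frontier_Iic, mem_inter_iff, mem_singleton_iff] at hx
  rw [hx.2, hc]

theorem contDiffOn_succ_ite_le {n : ℕ} (hU : IsOpen U)
    (hf : ∀ x ∈ U, HasDerivAt f (f' x) x) (hg : ∀ x ∈ U, HasDerivAt g (g' x) x)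
    (hc : f c = g c) (hc' : f' c = g' c)
    (h' : ContDiffOn ℝ n (fun x => if x ≤ c then f' x else g' x) U) :
    ContDiffOn ℝ (n + 1) (fun x => if x ≤ c then f x else g x) U := by
  have hderiv : ∀ x ∈ U, HasDerivAt (fun y => if y ≤ c then f y else g y)
      (if x ≤ c then f' x else g' x) x :=
    fun x hx => hasDerivAt_ite_le (hf x hx) (hg x hx) hc hc'
  rw [contDiffOn_succ_iff_deriv_of_isOpen hU]
  exact ⟨fun x hx => (hderiv x hx).differentiableAt.differentiableWithinAt,
    fun h => absurd h (by simp), h'.congr fun x hx => (hderiv x hx).deriv⟩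

end Gluing

theorem hasDerivAt_const_div_pow (b : ℝ) (n : ℕ) {t : ℝ} (ht : t ≠ 0) :
    HasDerivAt (fun t => b / t ^ n) (-(n * b) / t ^ (n + 1)) t := by
  refine ((hasDerivAt_const t b).div (hasDerivAt_pow n t) (pow_ne_zero n ht)).congr_deriv ?_
  rcases n with _ | n
  · simp
  · rw [Nat.add_sub_cancel]
    field_simp
    ring

noncomputable def weightProfile (a : ℝ) : ℝ → ℝ := fun t =>
  if t ≤ 1 then 2 - t ^ a
  else (2 - 3 * a - a ^ 2) / 2 + a * (a + 2) / t - a * (a + 1) / 2 / t ^ 2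

theorem contDiffOn_weightProfile (a : ℝ) : ContDiffOn ℝ 2 (weightProfile a) (Ioi 0) := by
  have hpow (p : ℝ) {t : ℝ} (ht : t ∈ Ioi (0 : ℝ)) :
      HasDerivAt (fun t => t ^ p) (p * t ^ (p - 1)) t :=
    Real.hasDerivAt_rpow_const (Or.inl (ne_of_gt ht))
  have hdiv (b : ℝ) (n : ℕ) {t : ℝ} (ht : t ∈ Ioi (0 : ℝ)) :=
    hasDerivAt_const_div_pow b n (ne_of_gt ht)
  have hinv (b : ℝ) {t : ℝ} (ht : t ∈ Ioi (0 : ℝ)) :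
      HasDerivAt (fun t => b / t) (-b / t ^ 2) t := by
    simpa using hdiv b 1 ht
  refine contDiffOn_succ_ite_le (n := 1) isOpen_Ioi
    (f' := fun t => -a * t ^ (a - 1))
    (g' := fun t => -(a * (a + 2)) / t ^ 2 + a * (a + 1) / t ^ 3)
    (fun t ht => ?_) (fun t ht => ?_) (by norm_num; ring) (by norm_num; ring) ?_
  · exact ((hpow a ht).const_sub 2).congr_deriv (by ring)
  · exact (((hasDerivAt_const t _).add (hinv (a * (a + 2)) ht)).sub
      (hdiv (a * (a + 1) / 2) 2 ht)).congr_deriv (by push_cast; ring)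
  refine contDiffOn_succ_ite_le (n := 0) isOpen_Ioi
    (f' := fun t => -a * (a - 1) * t ^ (a - 2))
    (g' := fun t => 2 * (a * (a + 2)) / t ^ 3 - 3 * (a * (a + 1)) / t ^ 4)
    (fun t ht => ?_) (fun t ht => ?_) (by norm_num; ring) (by norm_num; ring) ?_
  · exact ((hpow (a - 1) ht).const_mul (-a)).congr_deriv
      (by rw [sub_sub, one_add_one_eq_two]; ring)
  · exact ((hdiv (-(a * (a + 2))) 2 ht).add (hdiv (a * (a + 1)) 3 ht)).congr_deriv
      (by push_cast; ring)
  rw [CharP.cast_eq_zero, contDiffOn_zero]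
  refine ContinuousOn.ite_le ?_ ?_ (by norm_num; ring)
  · exact continuousOn_const.mul (continuousOn_id.rpow_const fun t ht => Or.inl (ne_of_gt ht))
  · exact (continuousOn_const.div (continuousOn_pow 3) fun t ht => pow_ne_zero _ (ne_of_gt ht)).sub
      (continuousOn_const.div (continuousOn_pow 4) fun t ht => pow_ne_zero _ (ne_of_gt ht))

theorem weightProfile_pos {a t : ℝ} (ha : 0 < a) (ha' : a ^ 2 + 3 * a ≤ 2) (ht : 0 ≤ t) :
    0 < weightProfile a t := by
  unfold weightProfile
  split_ifs with hle
  · linarith [rpow_le_one ht hle ha.le]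
  · have ht1 : 1 < t := lt_of_not_ge hle
    have hnum : 0 < (2 - 3 * a - a ^ 2) / 2 * t ^ 2 + a * (a + 2) * t - a * (a + 1) / 2 := by
      nlinarith
    refine (div_pos hnum (by positivity : (0 : ℝ) < t ^ 2)).trans_eq ?_
    field_simp

theorem sq_add_three_mul_lt_two {a : ℝ} (ha : 0 ≤ a) (h : a < (√17 - 3) / 2) :
    a ^ 2 + 3 * a < 2 := by
  have h17 : 2 * a + 3 < √17 := by linarith
  nlinarith [(lt_sqrt (by linarith)).mp h17]

theorem abs_rpow_two_mul (x a : ℝ) : |x| ^ (2 * a) = (x ^ 2) ^ a := by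
  rw [rpow_mul (abs_nonneg x), rpow_two, sq_abs]

theorem eq_weightProfile_comp_sq {a : ℝ} {w : ℝ → ℝ}
    (hw₁ : ∀ x : ℝ, |x| ≤ 1 → w x = 2 - |x| ^ (2 * a))
    (hw₂ : ∀ x : ℝ, 1 ≤ |x| → w x = (2 - 3 * a - a ^ 2) / 2 + a * (a + 2) / x ^ 2
      - a * (a + 1) / 2 / x ^ 4) :
    w = fun x => weightProfile a (x ^ 2) := by
  ext x
  unfold weightProfile
  split_ifs with hx
  · rw [hw₁ x (sq_le_one_iff_abs_le_one x |>.mp hx), abs_rpow_two_mul]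
  · rw [hw₂ x (one_lt_sq_iff_one_lt_abs x |>.mp (lt_of_not_ge hx)).le]
    ring

/-- The singular weight used in the uniqueness proof in dimension `N = 1`:
positivity of `b₀`, regularity, and positivity. -/
theorem weight_dim_one
    (a b₀ b₂ b₄ : ℝ) (ha₀ : 1 / 2 < a) (ha₁ : a < (Real.sqrt 17 - 3) / 2)
    (hb₀ : b₀ = (2 - 3 * a - a ^ 2) / 2)
    (hb₂ : b₂ = a * (a + 2))
    (hb₄ : b₄ = a * (a + 1) / 2)
    (w : ℝ → ℝ)
    (hw₁ : ∀ x : ℝ, |x| ≤ 1 → w x = 2 - |x| ^ (2 * a))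
    (hw₂ : ∀ x : ℝ, 1 ≤ |x| → w x = b₀ + b₂ / x ^ 2 - b₄ / x ^ 4) :
    0 < b₀ ∧
    ContDiffOn ℝ 2 w {x : ℝ | x ≠ 0} ∧
    (∀ x : ℝ, x ≠ 0 → 0 < w x) := by
  subst hb₀ hb₂ hb₄
  have ha : 0 < a := by linarith
  have ha' : a ^ 2 + 3 * a < 2 := sq_add_three_mul_lt_two ha.le ha₁
  rw [eq_weightProfile_comp_sq hw₁ hw₂]
  refine ⟨by linarith, ?_, fun x _ => weightProfile_pos ha ha'.le (sq_nonneg x)⟩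
  exact (contDiffOn_weightProfile a).comp (contDiff_id.pow 2).contDiffOn
    fun _ hx => sq_pos_of_ne_zero hx
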